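/- arXiv:2412.10287 — 6 statements merged into one kernel-verified Lean document; each statement's English description precedes it below -/
import Mathlib

section
/- Correctness of the linear-algebra single-source 2-RPQ algorithm: given a 2-NFA 𝒩 = ⟨Q, Σ, Δ, λ_𝒩, Q_S, Q_F⟩, a graph 𝒢 = ⟨V, E, L, λ_𝒢⟩, and source v_s ∈ V, the relation 𝒫 ⊆ Q × V computed as the union of the iterates ℳ₀ = Q_S × {v_s}, ℳ_{n+1} = (⋃_{a ∈ Σ^↔ ∩ L^↔} {(q′,v′) | (q,q′) ∈ Δ^a, (v,v′) ∈ E^a, (q,v) ∈ ℳ_n}) \ 𝒫_n where 𝒫_n = ⋃_{m ≤ n} ℳ_m, satisfies: (q,v) ∈ 𝒫 if and only if there exist a 2-way path π_𝒢 in 𝒢 from v_s to v and a path π_𝒩 in 𝒩 from some q_s ∈ Q_S to q with ω^↔_𝒢(π_𝒢) ∩ ω_𝒩(π_𝒩) ≠ ∅. -/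
/-- `PathW step u w v`: there is a path from `u` to `v` whose chosen labels spell `w`. -/
def PathW {A V : Type*} (step : A → V → V → Prop) : V → List A → V → Prop
  | u, [], v => u = v
  | u, a :: w, v => ∃ t, step a u t ∧ PathW step t w v

lemma PathW_append {A V : Type*} (step : A → V → V → Prop) :
    ∀ (w : List A) (u v : V) (a : A),
      PathW step u (w ++ [a]) v ↔ ∃ t, PathW step u w t ∧ step a t v := by
  intro w
  induction w with
  | nil =>
    intro u v a
    simp only [List.nil_append, PathW]
    constructor
    · rintro ⟨t, h1, h2⟩; exact ⟨u, rfl, h2 ▸ h1⟩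
    · rintro ⟨t, rfl, h⟩; exact ⟨v, h, rfl⟩
  | cons b w ih =>
    intro u v a
    simp only [List.cons_append, PathW]
    constructor
    · rintro ⟨t, hb, h⟩
      obtain ⟨s, h1, h2⟩ := (ih t v a).mp h
      exact ⟨s, ⟨t, hb, h1⟩, h2⟩
    · rintro ⟨s, ⟨t, hb, h1⟩, h2⟩
      exact ⟨t, hb, (ih t v a).mpr ⟨s, h1, h2⟩⟩

/-- Correctness of the linear-algebra single-source 2-RPQ algorithm.
Here `A` is the shared alphabet `Σ^↔ ∩ L^↔`, `δ a q q'` means `(q,q') ∈ Δ^a`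
(an `a`-labelled transition of the 2-NFA `𝒩`), and `lab a v v'` means `(v,v') ∈ E^a`
(an `a`-labelled edge of `𝒢^↔`). The frontier sets `ℳₙ` satisfy
`ℳ₀ = Q_S × {v_s}` and `ℳ_{n+1} = (⋃_a {(q′,v′) | (q,q′) ∈ Δ^a, (v,v′) ∈ E^a,
(q,v) ∈ ℳₙ}) \ ⋃_{m ≤ n} ℳₘ`. Then `(q,v) ∈ 𝒫 = ⋃ₙ ℳₙ` iff there are a 2-way path
`π_𝒢` from `v_s` to `v`, a path `π_𝒩` from some `q_s ∈ Q_S` to `q`, and a common word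
`w ∈ ω^↔_𝒢(π_𝒢) ∩ ω_𝒩(π_𝒩)`. -/
theorem larpq_correct {Q V A : Type*}
    (δ : A → Q → Q → Prop) (QS : Set Q)
    (lab : A → V → V → Prop) (vs : V)
    (M : ℕ → Set (Q × V))
    (hM0 : M 0 = {p | p.1 ∈ QS ∧ p.2 = vs})
    (hMs : ∀ n, M (n + 1) =
      {p | ∃ a q v, δ a q p.1 ∧ lab a v p.2 ∧ (q, v) ∈ M n} \ ⋃ m ≤ n, M m)
    (q : Q) (v : V) :
    (q, v) ∈ ⋃ n, M n ↔
      ∃ w qs, qs ∈ QS ∧ PathW lab vs w v ∧ PathW δ qs w q := by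
  simp only [Set.mem_iUnion]
  constructor
  · rintro ⟨n, hn⟩
    induction n generalizing q v with
    | zero =>
      rw [hM0] at hn
      exact ⟨[], q, hn.1, hn.2.symm ▸ rfl, rfl⟩
    | succ n ih =>
      rw [hMs] at hn
      obtain ⟨⟨a, q0, v0, hδ, hlab, hm⟩, -⟩ := hn
      obtain ⟨w, qs, hqs, hpv, hpq⟩ := ih q0 v0 hm
      exact ⟨w ++ [a], qs, hqs, (PathW_append lab w vs v a).mpr ⟨v0, hpv, hlab⟩,
        (PathW_append δ w qs q a).mpr ⟨q0, hpq, hδ⟩⟩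
  · rintro ⟨w, qs, hqs, hpv, hpq⟩
    -- closure of the union
    have hcl : ∀ a q0 v0 q1 v1, (q0, v0) ∈ ⋃ n, M n → δ a q0 q1 → lab a v0 v1 →
        (q1, v1) ∈ ⋃ n, M n := by
      intro a q0 v0 q1 v1 h0 hδ hlab
      rw [Set.mem_iUnion] at h0 ⊢
      obtain ⟨n, hn⟩ := h0
      by_cases h : (q1, v1) ∈ ⋃ m ≤ n, M m
      · simp only [Set.mem_iUnion] at h
        obtain ⟨m, _, hm⟩ := h
        exact ⟨m, hm⟩
      · exact ⟨n + 1, (hMs n) ▸ ⟨⟨a, q0, v0, hδ, hlab, hn⟩, h⟩⟩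
    have h0 : (qs, vs) ∈ ⋃ n, M n := by
      rw [Set.mem_iUnion]; exact ⟨0, hM0 ▸ ⟨hqs, rfl⟩⟩
    clear hqs hM0 hMs
    induction w generalizing qs vs with
    | nil =>
      cases hpv; cases hpq; exact Set.mem_iUnion.mp h0
    | cons a w ih =>
      obtain ⟨v1, hlab, hpv'⟩ := hpv
      obtain ⟨q1, hδ, hpq'⟩ := hpq
      exact ih v1 q1 hpv' hpq' (hcl a qs vs q1 v1 h0 hδ hlab)
end

section
/- Loop invariant of the single-source 2-RPQ algorithm: for every n, (q,v) ∈ ℳ_n if and only if there exist a 2-way path π_𝒢 of length exactly n in 𝒢 from v_s to v and a path π_𝒩 of length exactly n in 𝒩 from some q_s ∈ Q_S to q with ω^↔_𝒢(π_𝒢) ∩ ω_𝒩(π_𝒩) ≠ ∅, and (q,v) ∉ ℳ_m for all m < n. -/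
lemma pathW_snoc {A V : Type*} (step : A → V → V → Prop) (a : A) :
    ∀ (w : List A) (u v : V), PathW step u (w ++ [a]) v ↔ ∃ t, PathW step u w t ∧ step a t v := by
  intro w
  induction w with
  | nil =>
    intro u v
    simp only [List.nil_append, PathW]
    constructor
    · rintro ⟨t, hs, rfl⟩; exact ⟨u, rfl, hs⟩
    · rintro ⟨t, rfl, hs⟩; exact ⟨v, hs, rfl⟩
  | cons b w ih =>
    intro u v
    simp only [List.cons_append, List.append_eq, PathW, ih]
    constructor
    · rintro ⟨t, hs, t', h1, h2⟩; exact ⟨t', ⟨t, hs, h1⟩, h2⟩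
    · rintro ⟨t', ⟨t, hs, h1⟩, h2⟩; exact ⟨t, hs, t', h1, h2⟩

/-- Loop invariant of the single-source 2-RPQ algorithm: `(q,v) ∈ ℳₙ` iff there are a
2-way path `π_𝒢` of length exactly `n` in `𝒢` from `v_s` to `v` and a path `π_𝒩` of
length exactly `n` in `𝒩` from some `q_s ∈ Q_S` to `q` with a common label word
(`ω^↔_𝒢(π_𝒢) ∩ ω_𝒩(π_𝒩) ≠ ∅`), and `(q,v) ∉ ℳₘ` for all `m < n`. -/
theorem larpq_invariant {Q V A : Type*}
    (δ : A → Q → Q → Prop) (QS : Set Q)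
    (lab : A → V → V → Prop) (vs : V)
    (M : ℕ → Set (Q × V))
    (hM0 : M 0 = {p | p.1 ∈ QS ∧ p.2 = vs})
    (hMs : ∀ n, M (n + 1) =
      {p | ∃ a q v, δ a q p.1 ∧ lab a v p.2 ∧ (q, v) ∈ M n} \ ⋃ m ≤ n, M m)
    (n : ℕ) (q : Q) (v : V) :
    (q, v) ∈ M n ↔
      ((∃ w qs, w.length = n ∧ qs ∈ QS ∧ PathW lab vs w v ∧ PathW δ qs w q) ∧
        ∀ m < n, (q, v) ∉ M m) := by
  induction n generalizing q v with
  | zero =>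
    rw [hM0]
    constructor
    · rintro ⟨hq, hv⟩
      exact ⟨⟨[], q, rfl, hq, hv.symm, rfl⟩, by omega⟩
    · rintro ⟨⟨w, qs, hlen, hqs, hg, hn⟩, -⟩
      rw [List.length_eq_zero_iff] at hlen
      subst hlen
      cases hg; cases hn
      exact ⟨hqs, rfl⟩
  | succ n ih =>
    rw [hMs n]
    constructor
    · rintro ⟨⟨a, q₀, v₀, hδ, hlab, hM⟩, hnot⟩
      simp only [Set.mem_iUnion, not_exists] at hnot
      obtain ⟨⟨w, qs, hlen, hqs, hg, hn⟩, -⟩ := (ih q₀ v₀).1 hM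
      refine ⟨⟨w ++ [a], qs, by simp [hlen], hqs,
        (pathW_snoc lab a w vs v).2 ⟨v₀, hg, hlab⟩,
        (pathW_snoc δ a w qs q).2 ⟨q₀, hn, hδ⟩⟩, ?_⟩
      intro m hm hmem
      exact hnot m (Nat.lt_succ_iff.mp hm) hmem
    · rintro ⟨⟨w, qs, hlen, hqs, hg, hn⟩, hfresh⟩
      rcases w.eq_nil_or_concat with rfl | ⟨w', a, rfl⟩
      · simp at hlen
      rw [List.concat_eq_append] at hg hn hlen
      obtain ⟨v₀, hg', hlab⟩ := (pathW_snoc lab a w' vs v).1 hg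
      obtain ⟨q₀, hn', hδ⟩ := (pathW_snoc δ a w' qs q).1 hn
      have hlen' : w'.length = n := by simpa using hlen
      have hMn : (q₀, v₀) ∈ M n := by
        by_cases hc : ∀ m < n, (q₀, v₀) ∉ M m
        · exact (ih q₀ v₀).2 ⟨⟨w', qs, hlen', hqs, hg', hn'⟩, hc⟩
        · push_neg at hc
          obtain ⟨m, hm, hmem⟩ := hc
          exfalso
          apply hfresh (m + 1) (by omega)
          rw [hMs m]
          refine ⟨⟨a, q₀, v₀, hδ, hlab, hmem⟩, ?_⟩
          simp only [Set.mem_iUnion, not_exists]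
          intro k hk hkm
          exact hfresh k (by omega) hkm
      refine ⟨⟨a, q₀, v₀, hδ, hlab, hMn⟩, ?_⟩
      simp only [Set.mem_iUnion, not_exists]
      intro k hk hkm
      exact hfresh k (by omega) hkm
end

section
/- Equivalence of the masked and unmasked fixpoint computations: the relation sequence 𝒫′₀ = Q_S × {v_s}, 𝒫′_{n+1} = 𝒫′_n ∪ F(𝒫′_n) (algorithm without a traversal matrix) satisfies 𝒫′_n = ⋃_{m ≤ n} ℳ_m for all n, where ℳ_m is the frontier sequence ℳ₀ = Q_S × {v_s}, ℳ_{m+1} = F(ℳ_m) \ ⋃_{k ≤ m} ℳ_k. -/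
/-- Equivalence of the masked and unmasked fixpoint computations. Here `F` is the
one-step simultaneous traversal map
`F(M) = ⋃_a {(q′,v′) | ∃ q v, (q,q′) ∈ Δ^a, (v,v′) ∈ E^a, (q,v) ∈ M}`
(`δ a q q'` means `(q,q') ∈ Δ^a` and `lab a v v'` means `(v,v') ∈ E^a`). The no-mask
iterates `𝒫′₀ = Q_S × {v_s}`, `𝒫′_{n+1} = 𝒫′ₙ ∪ F(𝒫′ₙ)` satisfy
`𝒫′ₙ = ⋃_{m ≤ n} ℳₘ`, where `ℳ₀ = Q_S × {v_s}`, `ℳ_{m+1} = F(ℳₘ) \ ⋃_{k ≤ m} ℳₖ`. -/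
theorem no_mask_eq_masked_union {Q V A : Type*}
    (δ : A → Q → Q → Prop) (QS : Set Q)
    (lab : A → V → V → Prop) (vs : V)
    (F : Set (Q × V) → Set (Q × V))
    (hF : ∀ X, F X = {p | ∃ a q v, δ a q p.1 ∧ lab a v p.2 ∧ (q, v) ∈ X})
    (M P' : ℕ → Set (Q × V))
    (hM0 : M 0 = {p | p.1 ∈ QS ∧ p.2 = vs})
    (hMs : ∀ n, M (n + 1) = F (M n) \ ⋃ m ≤ n, M m)
    (hP0 : P' 0 = {p | p.1 ∈ QS ∧ p.2 = vs})
    (hPs : ∀ n, P' (n + 1) = P' n ∪ F (P' n)) :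
    ∀ n, P' n = ⋃ m ≤ n, M m := by

  have hmono : ∀ X Y : Set (Q × V), X ⊆ Y → F X ⊆ F Y := by
    intro X Y hXY p hp
    rw [hF] at hp ⊢
    obtain ⟨a, q, v, h1, h2, h3⟩ := hp
    exact ⟨a, q, v, h1, h2, hXY h3⟩
  intro n
  induction n with
  | zero =>
    simp only [Nat.le_zero, Set.iUnion_iUnion_eq_left]
    rw [hP0, hM0]
  | succ n ih =>
    apply Set.Subset.antisymm
    · rw [hPs, ih]
      apply Set.union_subset
      · intro p hp
        simp only [Set.mem_iUnion] at hp ⊢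
        obtain ⟨m, hm, hpm⟩ := hp
        exact ⟨m, hm.trans (Nat.le_succ n), hpm⟩
      · intro p hp
        rw [hF] at hp
        obtain ⟨a, q, v, h1, h2, h3⟩ := hp
        simp only [Set.mem_iUnion] at h3
        obtain ⟨m, hm, hqv⟩ := h3
        have hpF : p ∈ F (M m) := by
          rw [hF]; exact ⟨a, q, v, h1, h2, hqv⟩
        by_cases hmem : p ∈ ⋃ k ≤ m, M k
        · simp only [Set.mem_iUnion] at hmem ⊢
          obtain ⟨k, hk, hpk⟩ := hmem
          exact ⟨k, (hk.trans hm).trans (Nat.le_succ n), hpk⟩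
        · have : p ∈ M (m + 1) := by rw [hMs]; exact ⟨hpF, hmem⟩
          simp only [Set.mem_iUnion]
          exact ⟨m + 1, Nat.succ_le_succ hm, this⟩
    · intro p hp
      simp only [Set.mem_iUnion] at hp
      obtain ⟨m, hm, hpm⟩ := hp
      rw [hPs]
      rcases Nat.lt_or_ge m (n + 1) with h | h
      · left
        rw [ih]
        simp only [Set.mem_iUnion]
        exact ⟨m, Nat.lt_succ_iff.mp h, hpm⟩
      · right
        have hmn : m = n + 1 := le_antisymm hm h
        subst hmn
        rw [hMs] at hpm
        have : p ∈ F (M n) := hpm.1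
        apply hmono (M n) (P' n) _ this
        rw [ih]
        intro x hx
        simp only [Set.mem_iUnion]
        exact ⟨n, le_refl n, hx⟩
end

section
/- Characterization of the no-mask iterate: in the algorithm without a traversal matrix, (q,v) ∈ 𝒫′_n if and only if there exist a 2-way path π_𝒢 of length at most n in 𝒢 from v_s to v and a path π_𝒩 of the same length at most n in 𝒩 from some q_s ∈ Q_S to q with ω^↔_𝒢(π_𝒢) ∩ ω_𝒩(π_𝒩) ≠ ∅. -/
lemma PathW_append_singleton {A V : Type*} (step : A → V → V → Prop)
    (w : List A) (a : A) : ∀ u v : V,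
    PathW step u (w ++ [a]) v ↔ ∃ t, PathW step u w t ∧ step a t v := by
  induction w with
  | nil =>
    intro u v
    simp only [List.nil_append, PathW]
    constructor
    · rintro ⟨t, h1, h2⟩; exact ⟨u, rfl, h2 ▸ h1⟩
    · rintro ⟨t, rfl, h⟩; exact ⟨v, h, rfl⟩
  | cons b w ih =>
    intro u v
    simp only [List.cons_append, PathW]
    constructor
    · rintro ⟨t, hb, h⟩
      obtain ⟨s, h1, h2⟩ := (ih t v).mp h
      exact ⟨s, ⟨t, hb, h1⟩, h2⟩
    · rintro ⟨s, ⟨t, hb, h1⟩, h2⟩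
      exact ⟨t, hb, (ih t v).mpr ⟨s, h1, h2⟩⟩

/-- Characterization of the no-mask iterate: with
`𝒫′₀ = Q_S × {v_s}`, `𝒫′_{n+1} = 𝒫′ₙ ∪ ⋃_a {(q′,v′) | ∃ q v, (q,q′) ∈ Δ^a,
(v,v′) ∈ E^a, (q,v) ∈ 𝒫′ₙ}`, we have `(q,v) ∈ 𝒫′ₙ` iff there exist a 2-way path `π_𝒢`
of length at most `n` from `v_s` to `v` and a path `π_𝒩` of the same length from some
`q_s ∈ Q_S` to `q` sharing a label word (the common word `w` has length at most `n`). -/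
theorem no_mask_iterate_characterization {Q V A : Type*}
    (δ : A → Q → Q → Prop) (QS : Set Q)
    (lab : A → V → V → Prop) (vs : V)
    (P' : ℕ → Set (Q × V))
    (hP0 : P' 0 = {p | p.1 ∈ QS ∧ p.2 = vs})
    (hPs : ∀ n, P' (n + 1) =
      P' n ∪ {p | ∃ a q v, δ a q p.1 ∧ lab a v p.2 ∧ (q, v) ∈ P' n})
    (n : ℕ) (q : Q) (v : V) :
    (q, v) ∈ P' n ↔
      ∃ w qs, w.length ≤ n ∧ qs ∈ QS ∧ PathW lab vs w v ∧ PathW δ qs w q := by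
  induction n generalizing q v with
  | zero =>
    rw [hP0]
    constructor
    · rintro ⟨hq, hv⟩
      exact ⟨[], q, by simp, hq, hv.symm, rfl⟩
    · rintro ⟨w, qs, hw, hqs, hg, hn⟩
      rw [Nat.le_zero, List.length_eq_zero_iff] at hw
      subst hw
      cases hg; cases hn
      exact ⟨hqs, rfl⟩
  | succ n ih =>
    rw [hPs n]
    constructor
    · rintro (h | ⟨a, q', v', hd, hl, hm⟩)
      · obtain ⟨w, qs, hw, hqs, hg, hn⟩ := (ih q v).mp h
        exact ⟨w, qs, hw.trans (Nat.le_succ n), hqs, hg, hn⟩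
      · obtain ⟨w, qs, hw, hqs, hg, hn⟩ := (ih q' v').mp hm
        refine ⟨w ++ [a], qs, by simpa using Nat.succ_le_succ hw, hqs, ?_, ?_⟩
        · exact (PathW_append_singleton lab w a vs v).mpr ⟨v', hg, hl⟩
        · exact (PathW_append_singleton δ w a qs q).mpr ⟨q', hn, hd⟩
    · rintro ⟨w, qs, hw, hqs, hg, hn⟩
      rcases Nat.lt_or_ge w.length (n + 1) with hlt | hge
      · exact Or.inl ((ih q v).mpr ⟨w, qs, Nat.lt_succ_iff.mp hlt, hqs, hg, hn⟩)
      · have hlen : w.length = n + 1 := le_antisymm hw hge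
        have : ¬ w = [] := by intro h; simp [h] at hlen
        obtain ⟨w', a, rfl⟩ := (List.eq_nil_or_concat w).resolve_left this
        rw [List.concat_eq_append] at hg hn hlen
        obtain ⟨v', hg', hl⟩ := (PathW_append_singleton lab w' a vs v).mp hg
        obtain ⟨q', hn', hd⟩ := (PathW_append_singleton δ w' a qs q).mp hn
        have hw' : w'.length ≤ n := by
          simp at hlen; omega
        exact Or.inr ⟨a, q', v', hd, hl, (ih q' v').mpr ⟨w', qs, hw', hqs, hg', hn'⟩⟩
end

section
/- Soundness of the final extraction: with 𝒫 as computed by the algorithm, the set {v | ∃ q_F ∈ Q_F, (q_F, v) ∈ 𝒫} equals the single-source 2-RPQ answer set [[⟨𝒢, [[𝒩]], v_s⟩]]_{SSR} = {v ∈ V | ∃ 2-way path π from v_s to v with ω^↔_𝒢(π) ∩ [[𝒩]] ≠ ∅}. -/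
/-- Language of a 2-NFA given by labelled transitions, start and final states. -/
def Lang {Q A : Type*} (δ : A → Q → Q → Prop) (QS QF : Set Q) : Set (List A) :=
  {w | ∃ qs ∈ QS, ∃ qf ∈ QF, PathW δ qs w qf}

lemma pathW_append_singleton {A V : Type*} (step : A → V → V → Prop)
    (w : List A) (a : A) (u v : V) :
    PathW step u (w ++ [a]) v ↔ ∃ t, PathW step u w t ∧ step a t v := by
  induction w generalizing u with
  | nil =>
    simp only [List.nil_append, PathW]
    constructor
    · rintro ⟨t, h, rfl⟩; exact ⟨u, rfl, h⟩
    · rintro ⟨t, rfl, h⟩; exact ⟨v, h, rfl⟩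
  | cons b w ih =>
    simp only [List.cons_append, PathW]
    constructor
    · rintro ⟨t, hb, h⟩
      obtain ⟨s, h1, h2⟩ := (ih t).1 h
      exact ⟨s, ⟨t, hb, h1⟩, h2⟩
    · rintro ⟨s, ⟨t, hb, h1⟩, h2⟩
      exact ⟨t, hb, (ih t).2 ⟨s, h1, h2⟩⟩

/-- Soundness of the final extraction: with `𝒫 = ⋃ₙ ℳₙ` computed by the algorithm
(`ℳ₀ = Q_S × {v_s}`, `ℳ_{n+1}` the one-step simultaneous traversal minus previously
visited pairs), the set `{v | ∃ q_F ∈ Q_F, (q_F,v) ∈ 𝒫}` equals the single-source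
2-RPQ answer set `{v | ∃ 2-way path π from v_s to v with ω^↔_𝒢(π) ∩ [[𝒩]] ≠ ∅}`. -/
theorem larpq_final_extraction {Q V A : Type*}
    (δ : A → Q → Q → Prop) (QS QF : Set Q)
    (lab : A → V → V → Prop) (vs : V)
    (M : ℕ → Set (Q × V))
    (hM0 : M 0 = {p | p.1 ∈ QS ∧ p.2 = vs})
    (hMs : ∀ n, M (n + 1) =
      {p | ∃ a q v, δ a q p.1 ∧ lab a v p.2 ∧ (q, v) ∈ M n} \ ⋃ m ≤ n, M m) :
    {v | ∃ qF ∈ QF, (qF, v) ∈ ⋃ n, M n} =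
      {v | ∃ w ∈ Lang δ QS QF, PathW lab vs w v} := by
  have sound : ∀ n q v, (q, v) ∈ M n →
      ∃ w, (∃ qs ∈ QS, PathW δ qs w q) ∧ PathW lab vs w v := by
    intro n
    induction n with
    | zero =>
      intro q v h
      rw [hM0] at h
      obtain ⟨hq, hv⟩ := h
      exact ⟨[], ⟨q, hq, rfl⟩, hv.symm⟩
    | succ n ih =>
      intro q v h
      rw [hMs n] at h
      obtain ⟨⟨a, q', v', hδ, hlab, hm⟩, -⟩ := h
      obtain ⟨w, ⟨qs, hqs, hp⟩, hpg⟩ := ih q' v' hm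
      exact ⟨w ++ [a],
        ⟨qs, hqs, (pathW_append_singleton δ w a qs q).2 ⟨q', hp, hδ⟩⟩,
        (pathW_append_singleton lab w a vs v).2 ⟨v', hpg, hlab⟩⟩
  have complete : ∀ (w : List A) (q : Q) (v : V),
      (∃ qs ∈ QS, PathW δ qs w q) → PathW lab vs w v → (q, v) ∈ ⋃ n, M n := by
    intro w
    induction w using List.reverseRecOn with
    | nil =>
      rintro q v ⟨qs, hqs, hp⟩ hpg
      cases hp
      apply Set.mem_iUnion.2 ⟨0, _⟩
      rw [hM0]
      exact ⟨hqs, hpg.symm⟩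
    | append_singleton w a ih =>
      rintro q v ⟨qs, hqs, hp⟩ hpg
      obtain ⟨q', hp, hδ⟩ := (pathW_append_singleton δ w a qs q).1 hp
      obtain ⟨v', hpg, hlab⟩ := (pathW_append_singleton lab w a vs v).1 hpg
      obtain ⟨n, hn⟩ := Set.mem_iUnion.1 (ih q' v' ⟨qs, hqs, hp⟩ hpg)
      by_cases hvis : (q, v) ∈ ⋃ m ≤ n, M m
      · obtain ⟨m, hm⟩ := Set.mem_iUnion.1 hvis
        obtain ⟨-, hm⟩ := Set.mem_iUnion.1 hm
        exact Set.mem_iUnion.2 ⟨m, hm⟩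
      · refine Set.mem_iUnion.2 ⟨n + 1, ?_⟩
        rw [hMs n]
        exact ⟨⟨a, q', v', hδ, hlab, hn⟩, hvis⟩
  ext v
  constructor
  · rintro ⟨qF, hqF, h⟩
    obtain ⟨n, hn⟩ := Set.mem_iUnion.1 h
    obtain ⟨w, ⟨qs, hqs, hp⟩, hpg⟩ := sound n qF v hn
    exact ⟨w, ⟨qs, hqs, qF, hqF, hp⟩, hpg⟩
  · rintro ⟨w, ⟨qs, hqs, qF, hqF, hp⟩, hpg⟩
    exact ⟨qF, hqF, complete w qF v ⟨qs, hqs, hp⟩ hpg⟩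
end

section
/- Path-length witness bound: if v ∈ [[⟨𝒢,ℛ,v_s⟩]]_{SSR} with ℛ = [[𝒩]], then there exists a 2-way path π in 𝒢 from v_s to v of length at most |Q|·|V| with ω^↔(π) ∩ ℛ ≠ ∅, where Q is the state set of 𝒩 and V the vertex set of 𝒢. -/
lemma PathW_append_s16 {A S : Type*} {step : A → S → S → Prop} :
    ∀ (w1 : List A) (s m t : S) (w2 : List A),
      PathW step s w1 m → PathW step m w2 t → PathW step s (w1 ++ w2) t := by
  intro w1
  induction w1 with
  | nil => intro s m t w2 h1 h2; cases h1; exact h2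
  | cons a w ih =>
    rintro s m t w2 ⟨u, hu, hp⟩ h2
    exact ⟨u, hu, ih u m t w2 hp h2⟩

lemma exists_states {A S : Type*} {step : A → S → S → Prop} :
    ∀ (w : List A) (s t : S), PathW step s w t →
      ∃ f : ℕ → S, ∀ i, i ≤ w.length →
        PathW step s (w.take i) (f i) ∧ PathW step (f i) (w.drop i) t := by
  intro w
  induction w with
  | nil =>
    intro s t h
    exact ⟨fun _ => s, by intro i hi; obtain rfl : i = 0 := Nat.le_zero.mp hi; exact ⟨rfl, h⟩⟩
  | cons a w ih =>
    rintro s t ⟨u, hu, hp⟩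
    obtain ⟨f, hf⟩ := ih u t hp
    refine ⟨fun i => if i = 0 then s else f (i - 1), ?_⟩
    intro i hi
    cases i with
    | zero => exact ⟨rfl, u, hu, hp⟩
    | succ j =>
      simp only [Nat.succ_ne_zero, if_false, Nat.succ_sub_one]
      have hj := hf j (by simpa using hi)
      exact ⟨⟨u, hu, hj.1⟩, hj.2⟩

lemma shorten {A S : Type*} [Fintype S] {step : A → S → S → Prop} :
    ∀ (n : ℕ) (w : List A) (s t : S), w.length ≤ n → PathW step s w t →
      ∃ w', w'.length ≤ Fintype.card S ∧ PathW step s w' t := by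
  intro n
  induction n with
  | zero =>
    intro w s t hl hp
    exact ⟨w, by omega, hp⟩
  | succ n ih =>
    intro w s t hl hp
    by_cases hbig : w.length ≤ Fintype.card S
    · exact ⟨w, hbig, hp⟩
    push_neg at hbig
    obtain ⟨f, hf⟩ := exists_states w s t hp
    have hcard : Fintype.card S < Fintype.card (Fin (w.length + 1)) := by
      simpa using by omega
    obtain ⟨i, j, hij, hfeq⟩ :=
      Fintype.exists_ne_map_eq_of_card_lt (fun i : Fin (w.length + 1) => f i) hcard
    -- wlog i < j
    rcases lt_or_gt_of_ne hij with hlt | hgt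
    · have hi := hf i (by omega)
      have hj := hf j (by omega)
      have hpath : PathW step s (w.take i ++ w.drop j) t :=
        PathW_append_s16 _ _ _ _ _ hi.1 (hfeq ▸ hj.2)
      have hlen : (w.take i ++ w.drop j).length ≤ n := by
        have hi' : (i : ℕ) < j := hlt
        have hj' : (j : ℕ) ≤ w.length := by omega
        simp only [List.length_append, List.length_take, List.length_drop]
        omega
      exact ih _ s t hlen hpath
    · have hi := hf i (by omega)
      have hj := hf j (by omega)
      have hpath : PathW step s (w.take j ++ w.drop i) t :=
        PathW_append_s16 _ _ _ _ _ hj.1 (hfeq ▸ hi.2)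
      have hlen : (w.take j ++ w.drop i).length ≤ n := by
        have hi' : (j : ℕ) < i := hgt
        have hj' : (i : ℕ) ≤ w.length := by omega
        simp only [List.length_append, List.length_take, List.length_drop]
        omega
      exact ih _ s t hlen hpath

lemma PathW_prod_iff {A Q V : Type*} {δ : A → Q → Q → Prop} {lab : A → V → V → Prop} :
    ∀ (w : List A) (q q' : Q) (u u' : V),
      PathW (fun a p r => δ a p.1 r.1 ∧ lab a p.2 r.2) (q, u) w (q', u') ↔
        (PathW δ q w q' ∧ PathW lab u w u') := by
  intro w
  induction w with
  | nil =>
    intro q q' u u'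
    constructor
    · intro h; cases h; exact ⟨rfl, rfl⟩
    · rintro ⟨rfl, rfl⟩; rfl
  | cons a w ih =>
    intro q q' u u'
    constructor
    · rintro ⟨⟨m, n⟩, ⟨h1, h2⟩, hp⟩
      obtain ⟨hq, hu⟩ := (ih m q' n u').mp hp
      exact ⟨⟨m, h1, hq⟩, ⟨n, h2, hu⟩⟩
    · rintro ⟨⟨m, h1, hq⟩, ⟨n, h2, hu⟩⟩
      exact ⟨(m, n), ⟨h1, h2⟩, (ih m q' n u').mpr ⟨hq, hu⟩⟩

/-- Path-length witness bound: if `v ∈ [[⟨𝒢,ℛ,v_s⟩]]_{SSR}` with `ℛ = [[𝒩]]`, then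
there is a 2-way path `π` in `𝒢` from `v_s` to `v` of length at most `|Q|·|V|` with
`ω^↔(π) ∩ ℛ ≠ ∅`. -/
theorem witness_length_bound {Q V A : Type*} [Fintype Q] [Fintype V]
    (δ : A → Q → Q → Prop) (QS QF : Set Q)
    (lab : A → V → V → Prop) (vs v : V)
    (h : ∃ w ∈ Lang δ QS QF, PathW lab vs w v) :
    ∃ w ∈ Lang δ QS QF, PathW lab vs w v ∧
      w.length ≤ Fintype.card Q * Fintype.card V := by
  obtain ⟨w, ⟨qs, hqs, qf, hqf, hδ⟩, hlab⟩ := h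
  have hprod : PathW (fun a (p : Q × V) r => δ a p.1 r.1 ∧ lab a p.2 r.2)
      (qs, vs) w (qf, v) := (PathW_prod_iff w qs qf vs v).mpr ⟨hδ, hlab⟩
  obtain ⟨w', hlen, hp'⟩ := shorten w.length w (qs, vs) (qf, v) le_rfl hprod
  obtain ⟨hδ', hlab'⟩ := (PathW_prod_iff w' qs qf vs v).mp hp'
  refine ⟨w', ⟨qs, hqs, qf, hqf, hδ'⟩, hlab', ?_⟩
  simpa [Fintype.card_prod] using hlen
end
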